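/- Let R be an integral domain, not a field, with finite quotients, K = Frac(R). A basis for the topology of R̂_K is given by the sets V_w^{C_w} = {(u_{w'} + (w'))_{w'} ∈ R̂_K : u_w + (w) ∈ C_w}, where w ∈ K× and C_w ⊆ (R+(w))/(w). Moreover, if V_w^{C_w} is nonempty and r ∈ R is a non-invertible nonzero element, then V_w^{C_w} = V_{wr}^{C_{wr}} where C_{wr} = {u + (wr) : u + (w) ∈ C_w}, and C_{wr} has at least two elements whenever C_w is nonempty. -/

import Mathlib

set_option linter.unusedSectionVars false
set_option linter.unusedVariables false

variable (R : Type*) [CommRing R] [IsDomain R]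
variable (K : Type*) [Field K] [Algebra R K] [IsFractionRing R K]

/-- The fractional ideal `(w) = wR ⊆ K`, as an additive subgroup of `K`. -/
def Jw (w : K) : AddSubgroup K := (Submodule.span R {w}).toAddSubgroup

theorem Jw_le {w w' : K} (h : ∃ r : R, w' = w * algebraMap R K r) :
    Jw R K w' ≤ Jw R K w := by
  obtain ⟨r, rfl⟩ := h
  intro x hx
  have hsub : Submodule.span R {w * algebraMap R K r} ≤ Submodule.span R {w} := by
    rw [Submodule.span_le, Set.singleton_subset_iff]
    rw [mul_comm, ← Algebra.smul_def]
    exact Submodule.smul_mem _ _ (Submodule.mem_span_singleton_self w)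
  exact hsub hx

/-- The canonical projection `K/(w') → K/(w)` when `w ∣ w'`; on classes of elements of
`R + (w')` this is the canonical projection `p_{w,w'} : (R+(w'))/(w') → (R+(w))/(w)`. -/
def projw (w w' : K) (h : ∃ r : R, w' = w * algebraMap R K r) :
    K ⧸ Jw R K w' →+ K ⧸ Jw R K w :=
  QuotientAddGroup.map _ _ (AddMonoidHom.id K) (fun x hx => Jw_le R K h hx)

/-- Each quotient `K/(w)` (hence each `(R+(w))/(w)`) carries the discrete topology. -/
instance (w : K) : TopologicalSpace (K ⧸ Jw R K w) := ⊥

/-- The profinite completion `R̂_K = lim← (R+(w))/(w)` over `w ∈ K×` (with the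
divisibility order `w ≤ w' ↔ ∃ r ∈ R, w' = wr`), realised inside `Π_{w ∈ K×} K/(w)` as
the families of classes of elements of `R` compatible under the projections; the class
in `K/(w)` of an element `u_w ∈ R + (w)` records the element `u_w + (w)` of
`(R+(w))/(w)`. -/
abbrev RhatK := {x : ∀ w : {w : K // w ≠ 0}, K ⧸ Jw R K w.1 //
  (∀ w : {w : K // w ≠ 0}, ∃ r : R, x w = QuotientAddGroup.mk (algebraMap R K r)) ∧
  ∀ (w w' : {w : K // w ≠ 0}) (h : ∃ r : R, w'.1 = w.1 * algebraMap R K r),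
    projw R K w.1 w'.1 h (x w') = x w}


-- Auxiliary lemmas

instance (w : K) : DiscreteTopology (K ⧸ Jw R K w) := ⟨rfl⟩

theorem projw_mk (w w' : K) (h : ∃ r : R, w' = w * algebraMap R K r) (z : K) :
    projw R K w w' h (QuotientAddGroup.mk z) = QuotientAddGroup.mk z := rfl

theorem mk_eq_mk_Jw {w : K} {a b : K} (h : a - b ∈ Jw R K w) :
    (QuotientAddGroup.mk a : K ⧸ Jw R K w) = QuotientAddGroup.mk b := by
  rw [QuotientAddGroup.eq, neg_add_eq_sub]
  have := (Jw R K w).neg_mem h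
  rwa [neg_sub] at this

theorem self_mem_Jw (w : K) : w ∈ Jw R K w :=
  Submodule.mem_span_singleton_self w

/-- (`R` not a field, finite quotients.) The sets
`V_w^{C_w} = {x ∈ R̂_K : x_w ∈ C_w}` (`w ∈ K×`, `C_w ⊆ (R+(w))/(w)`) form a basis for
the topology of `R̂_K`. Moreover, if `r ∈ R` is nonzero and non-invertible and
`C ⊆ (R+(w))/(w)` (i.e. `C` consists of classes of elements of `R + (w)`), then
`V_w^C = V_{wr}^{C_{wr}}` where `C_{wr} = {u + (wr) : u + (w) ∈ C}`, and `C_{wr}` has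
at least two elements whenever `C` is nonempty. -/
theorem stmt19 (hnf : ¬IsField R)
    (hfin : ∀ m : R, m ≠ 0 → Finite (R ⧸ Ideal.span {m})) :
    -- the sets `V_w^{C_w}` form a basis of the topology of `R̂_K`
    TopologicalSpace.IsTopologicalBasis
      {V : Set (RhatK R K) | ∃ (w : K) (hw : w ≠ 0) (C : Set (K ⧸ Jw R K w)),
        V = {x : RhatK R K | x.1 ⟨w, hw⟩ ∈ C}} ∧
    -- passing from `w` to `wr` for a nonzero non-invertible `r ∈ R`
    (∀ (w : K) (hw : w ≠ 0) (C : Set (K ⧸ Jw R K w)),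
      (∀ c ∈ C, ∃ a b : R, c = (QuotientAddGroup.mk
          (algebraMap R K a + w * algebraMap R K b) : K ⧸ Jw R K w)) →
      ∀ (r : R) (hr : r ≠ 0) (hru : ¬IsUnit r),
      -- `C_{wr} = {u + (wr) : u + (w) ∈ C}`
      ∀ Cwr : Set (K ⧸ Jw R K (w * algebraMap R K r)),
        Cwr = {d | ∃ a b : R,
          (QuotientAddGroup.mk (algebraMap R K a + w * algebraMap R K b) :
            K ⧸ Jw R K w) ∈ C ∧
          d = (QuotientAddGroup.mk (algebraMap R K a + w * algebraMap R K b) :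
            K ⧸ Jw R K (w * algebraMap R K r))} →
        -- `V_w^C = V_{wr}^{C_{wr}}`
        ({x : RhatK R K | x.1 ⟨w, hw⟩ ∈ C} =
          {x : RhatK R K |
            x.1 ⟨w * algebraMap R K r,
              mul_ne_zero hw ((map_ne_zero_iff _
                (IsFractionRing.injective R K)).mpr hr)⟩ ∈ Cwr}) ∧
        -- `C_{wr}` has at least two elements whenever `C` is nonempty
        (C.Nonempty → ∃ d₁ ∈ Cwr, ∃ d₂ ∈ Cwr, d₁ ≠ d₂)) := by
    classical
  constructor
  · -- basis
    apply TopologicalSpace.isTopologicalBasis_of_isOpen_of_nhds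
    · rintro V ⟨w, hw, C, rfl⟩
      have hV : {x : RhatK R K | x.1 ⟨w, hw⟩ ∈ C} =
          Subtype.val ⁻¹' ((fun f : ∀ w : {w : K // w ≠ 0}, K ⧸ Jw R K w.1 =>
            f ⟨w, hw⟩) ⁻¹' C) := rfl
      rw [hV]
      exact (isOpen_discrete C).preimage
        ((continuous_apply (⟨w, hw⟩ : {w : K // w ≠ 0})).comp continuous_subtype_val)
    · intro x U hxU hU
      obtain ⟨U', hU', rfl⟩ := isOpen_induced_iff.mp hU
      obtain ⟨I, u, hIu, hpi⟩ := isOpen_pi_iff.mp hU' x.1 hxU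
      -- numerators and denominators
      have hsurj : ∀ i : {w : K // w ≠ 0}, ∃ n d : R, d ≠ 0 ∧
          i.1 * algebraMap R K d = algebraMap R K n := by
        intro i
        obtain ⟨⟨n, d⟩, h⟩ := IsLocalization.surj (nonZeroDivisors R) i.1
        exact ⟨n, d, nonZeroDivisors.ne_zero d.2, h⟩
      choose n d hd0 hnd using hsurj
      have hn0 : ∀ i : {w : K // w ≠ 0}, n i ≠ 0 := by
        intro i hni
        have : i.1 * algebraMap R K (d i) = 0 := by rw [hnd i, hni, map_zero]
        rcases mul_eq_zero.mp this with h | h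
        · exact i.2 h
        · exact hd0 i ((map_eq_zero_iff _ (IsFractionRing.injective R K)).mp h)
      set N : R := ∏ i ∈ I, n i with hNdef
      have hN0 : N ≠ 0 := Finset.prod_ne_zero_iff.mpr fun i _ => hn0 i
      have hwK : algebraMap R K N ≠ 0 :=
        (map_ne_zero_iff _ (IsFractionRing.injective R K)).mpr hN0
      have hdvd : ∀ i ∈ I, ∃ s : R, algebraMap R K N = i.1 * algebraMap R K s := by
        intro i hi
        refine ⟨d i * ∏ j ∈ I.erase i, n j, ?_⟩
        rw [map_mul, ← mul_assoc, hnd i, ← map_mul, Finset.mul_prod_erase _ _ hi]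
      set W : {w : K // w ≠ 0} := ⟨algebraMap R K N, hwK⟩ with hWdef
      refine ⟨{y : RhatK R K | y.1 W ∈
          {c : K ⧸ Jw R K (algebraMap R K N) | ∀ i, ∀ hi : i ∈ I,
            projw R K i.1 (algebraMap R K N) (hdvd i hi) c ∈ u i}},
        ⟨algebraMap R K N, hwK, _, rfl⟩, ?_, ?_⟩
      · intro i hi
        rw [x.2.2 i W (hdvd i hi)]
        exact (hIu i hi).2
      · intro y hy
        refine hpi ?_
        intro i hi
        have := hy i hi
        rwa [y.2.2 i W (hdvd i hi)] at this
  · -- moreover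
    rintro w hw C hCrep r hr hru Cwr rfl
    have hrK : algebraMap R K r ≠ 0 :=
      (map_ne_zero_iff _ (IsFractionRing.injective R K)).mpr hr
    have hwr : w * algebraMap R K r ≠ 0 := mul_ne_zero hw hrK
    have hdvdwr : ∃ s : R, w * algebraMap R K r = w * algebraMap R K s := ⟨r, rfl⟩
    constructor
    · ext x
      constructor
      · intro hx
        obtain ⟨s, hs⟩ := x.2.1 ⟨w * algebraMap R K r, hwr⟩
        have hcompat := x.2.2 ⟨w, hw⟩ ⟨w * algebraMap R K r, hwr⟩ hdvdwr
        refine ⟨s, 0, ?_, ?_⟩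
        · have h1 : (QuotientAddGroup.mk (algebraMap R K s + w * algebraMap R K 0) :
              K ⧸ Jw R K w) = x.1 ⟨w, hw⟩ := by
            rw [map_zero, mul_zero, add_zero, ← hcompat, hs, projw_mk]
          rw [h1]; exact hx
        · rw [map_zero, mul_zero, add_zero]; exact hs
      · rintro ⟨a, b, hab, hx⟩
        have hcompat := x.2.2 ⟨w, hw⟩ ⟨w * algebraMap R K r, hwr⟩ hdvdwr
        have : x.1 ⟨w, hw⟩ =
            (QuotientAddGroup.mk (algebraMap R K a + w * algebraMap R K b) :
              K ⧸ Jw R K w) := by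
          rw [← hcompat, hx, projw_mk]
        show x.1 ⟨w, hw⟩ ∈ C
        rw [this]; exact hab
    · rintro ⟨c, hc⟩
      obtain ⟨a, b, rfl⟩ := hCrep c hc
      refine ⟨QuotientAddGroup.mk (algebraMap R K a + w * algebraMap R K b),
        ⟨a, b, hc, rfl⟩,
        QuotientAddGroup.mk (algebraMap R K a + w * algebraMap R K (b + 1)),
        ⟨a, b + 1, ?_, rfl⟩, ?_⟩
      · have : (QuotientAddGroup.mk (algebraMap R K a + w * algebraMap R K (b + 1)) :
            K ⧸ Jw R K w) = QuotientAddGroup.mk (algebraMap R K a + w * algebraMap R K b) := by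
          apply mk_eq_mk_Jw
          have : algebraMap R K a + w * algebraMap R K (b + 1) -
              (algebraMap R K a + w * algebraMap R K b) = w := by
            rw [map_add, map_one]; ring
          rw [this]
          exact self_mem_Jw R K w
        rw [this]; exact hc
      · intro heq
        rw [QuotientAddGroup.eq] at heq
        have hwmem : w ∈ Jw R K (w * algebraMap R K r) := by
          have : -(algebraMap R K a + w * algebraMap R K b) +
              (algebraMap R K a + w * algebraMap R K (b + 1)) = w := by
            rw [map_add, map_one]; ring
          rwa [this] at heq
        obtain ⟨t, ht⟩ := Submodule.mem_span_singleton.mp hwmem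
        rw [Algebra.smul_def] at ht
        have h1 : w * (algebraMap R K (t * r)) = w * 1 := by
          rw [map_mul, mul_one]
          calc w * (algebraMap R K t * algebraMap R K r)
              = algebraMap R K t * (w * algebraMap R K r) := by ring
            _ = w := ht
        have h2 : algebraMap R K (t * r) = algebraMap R K 1 := by
          rw [map_one]; exact mul_left_cancel₀ hw h1
        have h3 : t * r = 1 := IsFractionRing.injective R K h2
        exact hru (IsUnit.of_mul_eq_one (a := r) t (by rw [mul_comm]; exact h3))
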